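/- arXiv:2308.07684 — 2 statements merged into one kernel-verified Lean document; each statement's English description precedes it below -/
import Mathlib

section
/- For every odd prime n, the edge set of K_n □ K_n can be partitioned into n paths. In particular, since K_n □ K_n has n² vertices, it can be decomposed into at most √(n²) = n paths, confirming Gallai's conjecture for these graphs. -/
/-!
Write `n = 2m + 1`. A base path with `n(n - 1)` edges runs through blocks `c = 0, …, m - 1`. In
block `c` it alternates between the diagonals `x - y = -c` and `x - y = c + 1`, changing the second
and then the first coordinate by `-(2c + 1)`, which is invertible because `n` is prime; its `n`-th
change of the second coordinate reaches `(c + 1, 0)`, and the edge to `(-(c + 1), 0)` starts block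
`c + 1`.

The `n` translates `(x, y) ↦ (x + t, y)` of this path are edge-disjoint: an edge `{v, w}` of the
`t`-th translate with `v.2 = w.2 = 0` has `v.1 + w.1 = 2t`, and any other one joins two diagonals
whose indices sum to `2t + 1`. As `K_n □ K_n` has `n · n(n - 1)` edges, the translates cover
them.
-/

/-- The Cartesian product `K_n □ K_m` on vertex set `ZMod n × ZMod m`: distinct
vertices are adjacent iff they agree in some coordinate. -/
def rook (n m : ℕ) : SimpleGraph (ZMod n × ZMod m) where
  Adj v w := v ≠ w ∧ (v.1 = w.1 ∨ v.2 = w.2)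
  symm := by
    constructor
    rintro v w ⟨h1, h2⟩
    exact ⟨fun h => h1 h.symm, h2.imp Eq.symm Eq.symm⟩
  loopless := by constructor; rintro v ⟨h, -⟩; exact h rfl

/-- The translation `(a, b) ↦ (a + t, b)` on `ZMod n × ZMod m`. -/
def shift (n m : ℕ) (t : ZMod n) : ZMod n × ZMod m → ZMod n × ZMod m :=
  fun v => (v.1 + t, v.2)

/-- The translation `shift n m t` as a graph homomorphism of `rook n m`. -/
def shiftHom (n m : ℕ) (t : ZMod n) : rook n m →g rook n m where
  toFun := shift n m t
  map_rel' := by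
    rintro v w ⟨h1, h2⟩
    constructor
    · intro hc
      apply h1
      have ha := congrArg Prod.fst hc
      have hb := congrArg Prod.snd hc
      simp only [shift] at ha hb
      exact Prod.ext (by exact add_right_cancel ha) hb
    · rcases h2 with h | h
      · exact Or.inl (by simp [shift, h])
      · exact Or.inr (by simp [shift, h])

open Finset SimpleGraph Function

namespace Finset

theorem existsUnique_mem_of_card_le_sum {ι α : Type*} [Fintype ι] [DecidableEq α]
    {s : Finset α} {S : ι → Finset α} (hsub : ∀ i, S i ⊆ s)
    (hdisj : Pairwise (Disjoint on S)) (hcard : #s ≤ ∑ i, #(S i)) {a : α} (ha : a ∈ s) :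
    ∃! i, a ∈ S i := by
  have hunion : univ.biUnion S = s := by
    refine eq_of_subset_of_card_le (biUnion_subset.2 fun i _ => hsub i) ?_
    rwa [card_biUnion fun i _ j _ hij => hdisj hij]
  obtain ⟨i, -, hi⟩ := mem_biUnion.1 (hunion ▸ ha)
  refine ⟨i, hi, fun j hj => ?_⟩
  by_contra hji
  exact disjoint_left.1 (hdisj hji) hj hi

end Finset

namespace SimpleGraph

variable {V : Type*} [DecidableEq V]

def pathEdges (f : ℕ → V) (L : ℕ) : Finset (Sym2 V) :=
  (range L).image fun i => s(f i, f (i + 1))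

theorem card_pathEdges {f : ℕ → V} {L : ℕ} (hf : Set.InjOn f (Set.Iic L)) :
    #(pathEdges f L) = L := by
  rw [pathEdges, card_image_of_injOn, card_range]
  intro i hi j hj hij
  simp only [coe_range, Set.mem_Iio] at hi hj
  have inj : ∀ {a b}, a ≤ L → b ≤ L → f a = f b → a = b := fun ha hb => hf ha hb
  rcases Sym2.eq_iff.1 hij with ⟨h, -⟩ | ⟨h₁, h₂⟩
  · exact inj hi.le hj.le h
  · have := inj hi.le hj h₁
    have := inj hi hj.le h₂
    omega

def pathSubgraph (G : SimpleGraph V) (f : ℕ → V) (L : ℕ)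
    (hadj : ∀ i < L, G.Adj (f i) (f (i + 1))) : G.Subgraph where
  verts := f '' Set.Iic L
  Adj v w := s(v, w) ∈ pathEdges f L
  adj_sub {v w} h := by
    obtain ⟨i, hi, he⟩ := mem_image.1 h
    rw [← G.mem_edgeSet, ← he]
    exact hadj i (mem_range.1 hi)
  edge_vert {v w} h := by
    obtain ⟨i, hi, he⟩ := mem_image.1 h
    have hi : i < L := mem_range.1 hi
    rcases Sym2.mem_iff.1 (he ▸ Sym2.mem_mk_left v w) with rfl | rfl
    · exact ⟨i, Set.mem_Iic.2 hi.le, rfl⟩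
    · exact ⟨i + 1, Set.mem_Iic.2 hi, rfl⟩
  symm := ⟨fun _ _ h => by rwa [Sym2.eq_swap]⟩

variable {G : SimpleGraph V} {f : ℕ → V} {L : ℕ} {hadj : ∀ i < L, G.Adj (f i) (f (i + 1))}

@[simp]
theorem mem_edgeSet_pathSubgraph {e : Sym2 V} :
    e ∈ (G.pathSubgraph f L hadj).edgeSet ↔ e ∈ pathEdges f L := by
  induction e using Sym2.ind
  exact Subgraph.mem_edgeSet

theorem pathEdges_subset_edgeFinset [Fintype G.edgeSet]
    (hadj : ∀ i < L, G.Adj (f i) (f (i + 1))) :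
    pathEdges f L ⊆ G.edgeFinset := fun _ he =>
  G.mem_edgeFinset.2 <| (G.pathSubgraph f L hadj).edgeSet_subset (mem_edgeSet_pathSubgraph.2 he)

theorem pathSubgraph_adj_iff (hf : Set.InjOn f (Set.Iic L)) {a b : ℕ} (ha : a ≤ L)
    (hb : b ≤ L) :
    (G.pathSubgraph f L hadj).Adj (f a) (f b) ↔ a + 1 = b ∨ b + 1 = a := by
  have inj : ∀ {a b}, a ≤ L → b ≤ L → f a = f b → a = b := fun ha hb => hf ha hb
  change s(f a, f b) ∈ pathEdges f L ↔ _
  constructor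
  · intro h
    obtain ⟨i, hi, he⟩ := mem_image.1 h
    have hi : i < L := mem_range.1 hi
    rcases Sym2.eq_iff.1 he with ⟨h₁, h₂⟩ | ⟨h₁, h₂⟩
    · have := inj hi.le ha h₁
      have := inj hi hb h₂
      omega
    · have := inj hi.le hb h₁
      have := inj hi ha h₂
      omega
  · rintro (rfl | rfl)
    · exact mem_image.2 ⟨a, mem_range.2 (by omega : a < L), rfl⟩
    · exact mem_image.2 ⟨b, mem_range.2 (by omega : b < L), Sym2.eq_swap⟩

theorem nonempty_pathSubgraph_iso_pathGraph (hf : Set.InjOn f (Set.Iic L)) :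
    Nonempty ((G.pathSubgraph f L hadj).coe ≃g pathGraph (L + 1)) := by
  let g : Fin (L + 1) → (G.pathSubgraph f L hadj).verts :=
    fun i => ⟨f i, Set.mem_image_of_mem f (Set.mem_Iic.2 (Nat.lt_succ_iff.1 i.2))⟩
  have hg : Bijective g := by
    refine ⟨fun a b hab => Fin.ext (hf ?_ ?_ (congrArg Subtype.val hab)), ?_⟩
    · exact Set.mem_Iic.2 (Nat.lt_succ_iff.1 a.2)
    · exact Set.mem_Iic.2 (Nat.lt_succ_iff.1 b.2)
    · rintro ⟨v, hv⟩
      obtain ⟨i, hi, rfl⟩ : v ∈ f '' Set.Iic L := hv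
      exact ⟨⟨i, Nat.lt_succ_iff.2 hi⟩, rfl⟩
  refine ⟨(⟨Equiv.ofBijective g hg, fun {a b} => ?_⟩ : pathGraph (L + 1) ≃g _).symm⟩
  rw [pathGraph_adj]
  exact pathSubgraph_adj_iff (hadj := hadj) hf (Nat.lt_succ_iff.1 a.2) (Nat.lt_succ_iff.1 b.2)

end SimpleGraph

instance (n m : ℕ) : DecidableRel (rook n m).Adj :=
  fun v w => inferInstanceAs (Decidable (v ≠ w ∧ (v.1 = w.1 ∨ v.2 = w.2)))

theorem rook_eq_boxProd (n m : ℕ) :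
    rook n m = (⊤ : SimpleGraph (ZMod n)) □ (⊤ : SimpleGraph (ZMod m)) := by
  ext v w
  simp only [rook, boxProd_adj, top_adj, ne_eq, Prod.ext_iff]
  tauto

theorem two_mul_card_edgeFinset_rook (n m : ℕ) [NeZero n] [NeZero m] :
    2 * #(rook n m).edgeFinset = n * m * (n - 1 + (m - 1)) := by
  classical
  let e : rook n m ≃g (⊤ : SimpleGraph (ZMod n)) □ (⊤ : SimpleGraph (ZMod m)) :=
    ⟨Equiv.refl _, by simp [rook_eq_boxProd]⟩
  rw [e.card_edgeFinset_eq, ← sum_degrees_eq_twice_card_edges]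
  simp only [degree_boxProd, complete_graph_degree, ZMod.card, sum_const, card_univ,
    Fintype.card_prod, smul_eq_mul]

namespace ZMod

theorem intCast_eq_intCast_of_sub_lt {n : ℕ} {a b : ℤ} (h₁ : a - b < n) (h₂ : b - a < n)
    (h : (a : ZMod n) = b) : a = b := by
  have := Int.eq_zero_of_abs_lt_dvd ((intCast_eq_intCast_iff_dvd_sub a b n).1 h)
    (abs_lt.2 ⟨by omega, by omega⟩)
  omega

theorem intCast_ne_zero_of_pos_of_lt {n : ℕ} {a : ℤ} (h₀ : 0 < a) (h : a < n) :
    (a : ZMod n) ≠ 0 := by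
  intro ha
  have h0 : (a : ZMod n) = ((0 : ℤ) : ZMod n) := by rw [ha, Int.cast_zero]
  have := intCast_eq_intCast_of_sub_lt (by omega) (by omega) h0
  omega

end ZMod

theorem shift_injective (n m : ℕ) (t : ZMod n) : Injective (shift n m t) := by
  intro v w h
  simpa [shift, Prod.ext_iff] using h

namespace RookPaths

variable {n m : ℕ}

def diagonal (c r : ℕ) : ℤ := if r = 0 then -c else c + 1

/-- Vertex `2 (c n + j) + r` of the base path, on the diagonal `x - y = diagonal c r`. -/
def vertexAt (n c j r : ℕ) : ZMod n × ZMod n :=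
  ((diagonal c r : ZMod n) + (j + r) * -(2 * c + 1), (j + r) * -(2 * c + 1))

def baseVertex (n i : ℕ) : ZMod n × ZMod n :=
  vertexAt n (i / 2 / n) (i / 2 % n) (i % 2)

theorem baseVertex_eq {c j r : ℕ} (hj : j < n) (hr : r < 2) :
    baseVertex n (2 * (c * n + j) + r) = vertexAt n c j r := by
  have h₁ : (2 * (c * n + j) + r) / 2 = c * n + j := by omega
  have h₂ : (2 * (c * n + j) + r) % 2 = r := by omega
  have h₃ : (c * n + j) / n = c := by
    rw [Nat.mul_comm, Nat.mul_add_div (by omega), Nat.div_eq_of_lt hj, Nat.add_zero]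
  have h₄ : (c * n + j) % n = j := by
    rw [Nat.mul_comm, Nat.mul_add_mod, Nat.mod_eq_of_lt hj]
  rw [baseVertex, h₁, h₂, h₃, h₄]

theorem exists_eq_block (hn : 0 < n) (i : ℕ) :
    ∃ c j r, j < n ∧ r < 2 ∧ i = 2 * (c * n + j) + r :=
  ⟨i / 2 / n, i / 2 % n, i % 2, Nat.mod_lt _ hn, Nat.mod_lt _ two_pos, by
    rw [Nat.mul_comm (i / 2 / n), Nat.div_add_mod, Nat.div_add_mod]⟩

theorem fst_sub_snd_vertexAt (c j r : ℕ) :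
    (vertexAt n c j r).1 - (vertexAt n c j r).2 = diagonal c r := by
  simp [vertexAt]

theorem slope_ne_zero (hnm : n = 2 * m + 1) {c : ℕ} (hc : c < m) :
    (-(2 * c + 1) : ZMod n) ≠ 0 := by
  rw [neg_ne_zero]
  exact_mod_cast ZMod.intCast_ne_zero_of_pos_of_lt (n := n) (a := 2 * c + 1) (by omega) (by omega)

def edgeKey : Sym2 (ZMod n × ZMod n) → ZMod n :=
  Sym2.lift ⟨fun v w => if v.2 = 0 ∧ w.2 = 0 then v.1 + w.1 else v.1 - v.2 + (w.1 - w.2) - 1,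
    fun v w => by simp only [and_comm, add_comm]⟩

theorem edgeKey_mk (v w : ZMod n × ZMod n) :
    edgeKey s(v, w) = if v.2 = 0 ∧ w.2 = 0 then v.1 + w.1 else v.1 - v.2 + (w.1 - w.2) - 1 :=
  rfl

theorem edgeKey_shift (t : ZMod n) (v w : ZMod n × ZMod n) :
    edgeKey s(shift n n t v, shift n n t w) = edgeKey s(v, w) + 2 * t := by
  simp only [edgeKey_mk, shift]
  split_ifs <;> ring

theorem block_lt_or_eq_last (hnm : n = 2 * m + 1) {c j r : ℕ}
    (h : 2 * (c * n + j) + r ≤ n * (n - 1)) : c < m ∨ c = m ∧ j = 0 ∧ r = 0 := by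
  have hL : n * (n - 1) = 2 * (m * n) := by rw [show n - 1 = 2 * m by omega]; ring
  rcases lt_trichotomy c m with hc | rfl | hc
  · exact Or.inl hc
  · right; omega
  · have : (m + 1) * n ≤ c * n := Nat.mul_le_mul_right n hc
    rw [Nat.add_mul] at this
    omega

theorem vertexAt_row_step (hnm : n = 2 * m + 1) {c j : ℕ} (hc : c < m) :
    (vertexAt n c j 0).1 = (vertexAt n c j 1).1 ∧
      edgeKey s(vertexAt n c j 0, vertexAt n c j 1) = 0 := by
  refine ⟨by simp only [vertexAt, diagonal]; push_cast; ring, ?_⟩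
  rw [edgeKey_mk, if_neg]
  · simp only [vertexAt, diagonal]; push_cast; ring
  · rintro ⟨h₀, h₁⟩
    simp only [vertexAt] at h₀ h₁
    exact slope_ne_zero hnm hc (by linear_combination h₁ - h₀)

theorem vertexAt_column_step (hnm : n = 2 * m + 1) [Fact n.Prime] {c j : ℕ} (hc : c < m)
    (hj : j + 1 < n) :
    (vertexAt n c j 1).2 = (vertexAt n c (j + 1) 0).2 ∧
      edgeKey s(vertexAt n c j 1, vertexAt n c (j + 1) 0) = 0 := by
  refine ⟨by simp only [vertexAt]; push_cast; ring, ?_⟩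
  have hy : ((j : ZMod n) + 1) ≠ 0 := by
    exact_mod_cast ZMod.intCast_ne_zero_of_pos_of_lt (n := n) (a := j + 1) (by omega) (by omega)
  rw [edgeKey_mk, if_neg]
  · simp only [vertexAt, diagonal]; push_cast; ring
  · rintro ⟨h₀, -⟩
    simp only [vertexAt, Nat.cast_one] at h₀
    exact mul_ne_zero hy (slope_ne_zero hnm hc) h₀

theorem vertexAt_block_step [NeZero n] (c : ℕ) :
    (vertexAt n c (n - 1) 1).2 = (vertexAt n (c + 1) 0 0).2 ∧
      edgeKey s(vertexAt n c (n - 1) 1, vertexAt n (c + 1) 0 0) = 0 := by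
  have hn : ((n - 1 : ℕ) : ZMod n) + 1 = 0 := by
    rw [Nat.cast_sub NeZero.one_le, Nat.cast_one, sub_add_cancel, ZMod.natCast_self]
  have hy : (vertexAt n c (n - 1) 1).2 = 0 ∧ (vertexAt n (c + 1) 0 0).2 = 0 := by
    simp only [vertexAt, Nat.cast_one, hn]; push_cast; simp
  refine ⟨hy.1.trans hy.2.symm, ?_⟩
  rw [edgeKey_mk, if_pos hy]
  simp only [vertexAt, diagonal, Nat.cast_one, hn]; push_cast; ring

theorem baseVertex_step (hnm : n = 2 * m + 1) [Fact n.Prime] {p : ℕ} (hp : p < n * (n - 1)) :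
    ((baseVertex n p).1 = (baseVertex n (p + 1)).1 ∨
      (baseVertex n p).2 = (baseVertex n (p + 1)).2) ∧
    edgeKey s(baseVertex n p, baseVertex n (p + 1)) = 0 := by
  obtain ⟨c, j, r, hj, hr, rfl⟩ := exists_eq_block (n := n) (by omega) p
  have hc : c < m := by
    rcases block_lt_or_eq_last hnm hp.le with hc | ⟨rfl, rfl, rfl⟩
    · exact hc
    · have : n * (n - 1) = 2 * (c * n) := by rw [show n - 1 = 2 * c by omega]; ring
      omega
  interval_cases r
  · rw [baseVertex_eq hj (by norm_num), show 2 * (c * n + j) + 0 + 1 = 2 * (c * n + j) + 1 by ring,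
      baseVertex_eq hj (by norm_num)]
    exact (vertexAt_row_step hnm hc).imp_left Or.inl
  · rw [baseVertex_eq hj (by norm_num)]
    rcases Nat.lt_or_ge (j + 1) n with hj' | hj'
    · rw [show 2 * (c * n + j) + 1 + 1 = 2 * (c * n + (j + 1)) + 0 by ring,
        baseVertex_eq hj' (by norm_num)]
      exact (vertexAt_column_step hnm hc hj').imp_left Or.inr
    · obtain rfl : j = n - 1 := by omega
      rw [show 2 * (c * n + (n - 1)) + 1 + 1 = 2 * ((c + 1) * n + 0) + 0 by
          rw [Nat.add_mul]; omega,
        baseVertex_eq (by omega) (by norm_num)]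
      exact (vertexAt_block_step c).imp_left Or.inr

theorem baseVertex_injOn (hnm : n = 2 * m + 1) [Fact n.Prime] :
    Set.InjOn (baseVertex n) (Set.Iic (n * (n - 1))) := by
  intro i hi i' hi' h
  obtain ⟨c, j, r, hj, hr, rfl⟩ := exists_eq_block (n := n) (by omega) i
  obtain ⟨c', j', r', hj', hr', rfl⟩ := exists_eq_block (n := n) (by omega) i'
  have hc := block_lt_or_eq_last hnm (Set.mem_Iic.1 hi)
  have hc' := block_lt_or_eq_last hnm (Set.mem_Iic.1 hi')
  rw [baseVertex_eq hj hr, baseVertex_eq hj' hr'] at h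
  have hdiag : diagonal c r = diagonal c' r' := by
    refine ZMod.intCast_eq_intCast_of_sub_lt (n := n) ?_ ?_ ?_
    · unfold diagonal; split_ifs <;> omega
    · unfold diagonal; split_ifs <;> omega
    · rw [← fst_sub_snd_vertexAt, ← fst_sub_snd_vertexAt, h]
  obtain ⟨rfl, rfl⟩ : c = c' ∧ r = r' := by
    unfold diagonal at hdiag; split_ifs at hdiag <;> omega
  suffices j = j' by rw [this]
  rcases hc with hc | ⟨rfl, rfl, rfl⟩
  · have hy := add_right_cancel (mul_right_cancel₀ (slope_ne_zero hnm hc) (congrArg Prod.snd h))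
    exact_mod_cast ZMod.intCast_eq_intCast_of_sub_lt (n := n) (a := j) (b := j') (by omega)
      (by omega) (by exact_mod_cast hy)
  · omega

theorem rook_adj_baseVertex_succ (hnm : n = 2 * m + 1) [Fact n.Prime] {p : ℕ}
    (hp : p < n * (n - 1)) : (rook n n).Adj (baseVertex n p) (baseVertex n (p + 1)) := by
  refine ⟨fun h => ?_, (baseVertex_step hnm hp).1⟩
  have := baseVertex_injOn hnm (Set.mem_Iic.2 hp.le) (Set.mem_Iic.2 hp) h
  omega

theorem rook_adj_shift_baseVertex_succ (hnm : n = 2 * m + 1) [Fact n.Prime] (t : ZMod n) :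
    ∀ p < n * (n - 1), (rook n n).Adj ((shift n n t ∘ baseVertex n) p)
      ((shift n n t ∘ baseVertex n) (p + 1)) :=
  fun _ hp => (shiftHom n n t).map_adj (rook_adj_baseVertex_succ hnm hp)

def rookPath (hnm : n = 2 * m + 1) [Fact n.Prime] (t : ZMod n) : (rook n n).Subgraph :=
  (rook n n).pathSubgraph (shift n n t ∘ baseVertex n) (n * (n - 1))
    (rook_adj_shift_baseVertex_succ hnm t)

theorem injOn_shift_comp_baseVertex (hnm : n = 2 * m + 1) [Fact n.Prime] (t : ZMod n) :
    Set.InjOn (shift n n t ∘ baseVertex n) (Set.Iic (n * (n - 1))) :=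
  (shift_injective n n t).comp_injOn (baseVertex_injOn hnm)

theorem edgeKey_of_mem_edgeSet_rookPath (hnm : n = 2 * m + 1) [Fact n.Prime] {t : ZMod n}
    {e : Sym2 (ZMod n × ZMod n)} (he : e ∈ (rookPath hnm t).edgeSet) : edgeKey e = 2 * t := by
  obtain ⟨p, hp, rfl⟩ := mem_image.1 (mem_edgeSet_pathSubgraph.1 he)
  rw [comp_apply, comp_apply, edgeKey_shift,
    (baseVertex_step hnm (mem_range.1 hp)).2, zero_add]

theorem eq_of_mem_edgeSet_rookPath (hnm : n = 2 * m + 1) [Fact n.Prime] {t t' : ZMod n}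
    {e : Sym2 (ZMod n × ZMod n)} (he : e ∈ (rookPath hnm t).edgeSet)
    (he' : e ∈ (rookPath hnm t').edgeSet) : t = t' := by
  have h2 : (2 : ZMod n) ≠ 0 := by
    have := (Fact.out : n.Prime).two_le
    exact_mod_cast ZMod.intCast_ne_zero_of_pos_of_lt (n := n) (a := 2) (by omega) (by omega)
  exact mul_left_cancel₀ h2 <|
    (edgeKey_of_mem_edgeSet_rookPath hnm he).symm.trans (edgeKey_of_mem_edgeSet_rookPath hnm he')

theorem rookPath_injective (hnm : n = 2 * m + 1) [Fact n.Prime] :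
    Injective (rookPath hnm) := by
  intro t t' h
  have hL : 0 < n * (n - 1) := by
    have := (Fact.out : n.Prime).two_le
    exact Nat.mul_pos (by omega) (by omega)
  have he : s(shift n n t (baseVertex n 0), shift n n t (baseVertex n 1)) ∈
      (rookPath hnm t).edgeSet :=
    mem_edgeSet_pathSubgraph.2 (mem_image.2 ⟨0, mem_range.2 hL, rfl⟩)
  exact eq_of_mem_edgeSet_rookPath hnm he (h ▸ he)

theorem existsUnique_mem_edgeSet_rookPath (hnm : n = 2 * m + 1) [Fact n.Prime]
    {e : Sym2 (ZMod n × ZMod n)} (he : e ∈ (rook n n).edgeSet) :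
    ∃! t, e ∈ (rookPath hnm t).edgeSet := by
  simp only [rookPath, mem_edgeSet_pathSubgraph]
  refine existsUnique_mem_of_card_le_sum
    (fun t => pathEdges_subset_edgeFinset (rook_adj_shift_baseVertex_succ hnm t))
    (fun t t' htt => disjoint_left.2 fun e he he' => htt ?_) ?_ ((rook n n).mem_edgeFinset.2 he)
  · exact eq_of_mem_edgeSet_rookPath hnm (mem_edgeSet_pathSubgraph.2 he)
      (mem_edgeSet_pathSubgraph.2 he')
  · have hE := two_mul_card_edgeFinset_rook n n
    have : n * n * (n - 1 + (n - 1)) = 2 * (n * (n * (n - 1))) := by ring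
    simp only [card_pathEdges (injOn_shift_comp_baseVertex hnm _), sum_const, card_univ,
      ZMod.card, smul_eq_mul]
    omega

end RookPaths

open SimpleGraph in
/-- For every odd prime `n`, the edge set of `K_n □ K_n` (a connected graph on
`n²` vertices) can be partitioned into `n = √(n²)` paths, confirming Gallai's
conjecture for these graphs. -/
theorem gallai_for_rook (n : ℕ) (hn : n.Prime) (ho : Odd n) :
    ∃ D : Finset ((rook n n).Subgraph),
      D.card = n ∧
      (∀ B ∈ D, ∃ ℓ : ℕ, Nonempty (B.coe ≃g pathGraph (ℓ + 1))) ∧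
      (∀ e ∈ (rook n n).edgeSet, ∃! B, B ∈ D ∧ e ∈ B.edgeSet) := by
  classical
  have := Fact.mk hn
  obtain ⟨m, hnm⟩ := ho
  refine ⟨univ.image (RookPaths.rookPath hnm), ?_, ?_, fun e he => ?_⟩
  · rw [card_image_of_injective _ (RookPaths.rookPath_injective hnm), card_univ, ZMod.card]
  · simp only [mem_image, mem_univ, true_and, forall_exists_index, forall_apply_eq_imp_iff]
    exact fun t =>
      ⟨_, nonempty_pathSubgraph_iso_pathGraph (RookPaths.injOn_shift_comp_baseVertex hnm t)⟩
  · obtain ⟨t, ht, huniq⟩ := RookPaths.existsUnique_mem_edgeSet_rookPath hnm he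
    refine ⟨_, ⟨mem_image_of_mem _ (mem_univ t), ht⟩, ?_⟩
    rintro _ ⟨hB, he'⟩
    obtain ⟨t', -, rfl⟩ := mem_image.1 hB
    rw [huniq t' he']
end

section
/- For every odd prime n, the 2(n-1)-regular graph K_n □ K_n can be decomposed into n² paths each having exactly n-1 edges. -/
/-!
`rook n n` is the Cayley graph of `ZMod n × ZMod n` whose connection set is the union of the two
axes. If a path `x 0, …, x (k-1)` in a Cayley graph of an abelian group meets every nonzero
connection element exactly once as a step `x (i+1) - x i` or its negative, then its translates
partition the edges: `{v, w}` lies in the translate by `v - x i` for the unique step with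
`x (i+1) - x i = ±(w - v)`.

For `n = 2m + 1` prime the zigzag `x i = (T ⌈i/2⌉, T ⌊i/2⌋)`, with `T c = (c+1).choose 2` the
triangular numbers, has steps `(1,0), (0,1), (2,0), (0,2), …, (m,0), (0,m)`, one representative of
each `±` pair of nonzero axis elements. It visits distinct vertices because `T a = T b` in
`ZMod n` forces `(a - b) (a + b + 1) = 0`.
-/

namespace SimpleGraph

variable {G α : Type*} [AddCommGroup G] {s : Set G} {A : SimpleGraph α}

def addCayleyTranslate (s : Set G) (u : G) : addCayley s ≃g addCayley s where
  toEquiv := Equiv.addLeft u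
  map_rel_iff' := addCayley_adj_add_iff_right

namespace Copy

def translate (f : Copy A (addCayley s)) (u : G) : (addCayley s).Subgraph :=
  ((addCayleyTranslate s u).toCopy.comp f).toSubgraph

lemma translate_adj {f : Copy A (addCayley s)} {u v w : G} :
    (f.translate u).Adj v w ↔ ∃ d : A.Dart, u + f d.fst = v ∧ u + f d.snd = w := by
  simp only [translate, Subgraph.map_adj, Relation.Map, Subgraph.top_adj]
  constructor
  · rintro ⟨a, b, hab, rfl, rfl⟩
    exact ⟨⟨(a, b), hab⟩, rfl, rfl⟩
  · rintro ⟨d, rfl, rfl⟩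
    exact ⟨d.fst, d.snd, d.adj, rfl, rfl⟩

variable (f : Copy A (addCayley s))

lemma eq_of_translate_adj (hf : Function.Injective fun d : A.Dart => f d.snd - f d.fst)
    {u u' v w : G} (h : (f.translate u).Adj v w) (h' : (f.translate u').Adj v w) : u = u' := by
  obtain ⟨d, rfl, rfl⟩ := translate_adj.mp h
  obtain ⟨d', hv', hw'⟩ := translate_adj.mp h'
  obtain rfl : d = d' := hf <| show f d.snd - f d.fst = f d'.snd - f d'.fst by
    rw [← add_sub_add_left_eq_sub _ _ u, ← hv', ← hw', add_sub_add_left_eq_sub]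
  exact (add_right_cancel hv').symm

lemma exists_translate_adj (hf : ∀ g ∈ s, g ≠ 0 → ∃ d : A.Dart, f d.snd - f d.fst = g)
    {v w : G} (h : (addCayley s).Adj v w) : ∃ u, (f.translate u).Adj v w := by
  suffices ∃ d : A.Dart, f d.snd - f d.fst = -v + w by
    obtain ⟨d, hd⟩ := this
    refine ⟨v - f d.fst, translate_adj.mpr ⟨d, sub_add_cancel _ _, ?_⟩⟩
    rw [sub_add_eq_add_sub, add_sub_assoc, hd, add_neg_cancel_left]
  obtain ⟨hne, hvw | hwv⟩ := (addCayley_adj s v w).mp h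
  · exact hf _ hvw (neg_add_eq_zero.not.mpr hne)
  · obtain ⟨d, hd⟩ := hf _ hwv (neg_add_eq_zero.not.mpr hne.symm)
    exact ⟨d.symm, by
      rw [Dart.symm_toProd, Prod.fst_swap, Prod.snd_swap, ← neg_sub, hd, neg_add_rev, neg_neg]⟩

lemma translate_injective [Nonempty A.Dart]
    (hf : Function.Injective fun d : A.Dart => f d.snd - f d.fst) :
    Function.Injective f.translate := by
  intro u u' h
  obtain ⟨d⟩ := ‹Nonempty A.Dart›
  have hu : (f.translate u).Adj (u + f d.fst) (u + f d.snd) := translate_adj.mpr ⟨d, rfl, rfl⟩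
  exact f.eq_of_translate_adj hf hu (h ▸ hu)

end Copy

theorem exists_addCayley_decomposition [Fintype G] [Nonempty A.Dart] (f : Copy A (addCayley s))
    (hinj : Function.Injective fun d : A.Dart => f d.snd - f d.fst)
    (hcover : ∀ g ∈ s, g ≠ 0 → ∃ d : A.Dart, f d.snd - f d.fst = g) :
    ∃ D : Finset (addCayley s).Subgraph,
      D.card = Fintype.card G ∧
      (∀ B ∈ D, Nonempty (B.coe ≃g A)) ∧
      (∀ e ∈ (addCayley s).edgeSet, ∃! B, B ∈ D ∧ e ∈ B.edgeSet) := by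
  classical
  refine ⟨Finset.univ.image f.translate, ?_, ?_, ?_⟩
  · rw [Finset.card_image_of_injective _ (f.translate_injective hinj), Finset.card_univ]
  · intro B hB
    obtain ⟨u, -, rfl⟩ := Finset.mem_image.mp hB
    exact ⟨(Copy.isoToSubgraph _).symm⟩
  · intro e he
    induction e using Sym2.ind with
    | _ v w =>
      obtain ⟨u, hu⟩ := f.exists_translate_adj hcover he
      refine ⟨f.translate u, ⟨Finset.mem_image_of_mem _ (Finset.mem_univ u), hu⟩, ?_⟩
      rintro _ ⟨hB, hvw⟩
      obtain ⟨u', -, rfl⟩ := Finset.mem_image.mp hB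
      rw [f.eq_of_translate_adj hinj hvw hu]

section pathGraph

variable (f : ℕ → G) {k : ℕ}

def pathCopy (hinj : Set.InjOn f {i | i < k}) (hs : ∀ i, i + 1 < k → f (i + 1) - f i ∈ s) :
    Copy (pathGraph k) (addCayley s) :=
  Hom.toCopy
    { toFun := fun a => f a
      map_rel' := fun {a b} hab => by
        refine (addCayley_adj s _ _).mpr ⟨fun h => hab.ne (Fin.ext (hinj a.2 b.2 h)), ?_⟩
        rcases pathGraph_adj.mp hab with hab | hab
        · exact Or.inl (by simpa [← hab, sub_eq_neg_add] using hs a (hab ▸ b.2))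
        · exact Or.inr (by simpa [← hab, sub_eq_neg_add] using hs b (hab ▸ a.2)) }
    fun a b h => Fin.ext (hinj a.2 b.2 h)

lemma pathGraph_dart_sub_injective
    (hstep : ∀ i j, i + 1 < k → j + 1 < k → f (i + 1) - f i = f (j + 1) - f j → i = j)
    (hneg : ∀ i j, i + 1 < k → j + 1 < k → f (i + 1) - f i ≠ -(f (j + 1) - f j)) :
    Function.Injective fun d : (pathGraph k).Dart => f d.snd - f d.fst := by
  rintro ⟨⟨a, b⟩, hab⟩ ⟨⟨c, d⟩, hcd⟩ h
  dsimp only at h hab hcd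
  suffices (a : ℕ) = c ∧ (b : ℕ) = d by
    exact Dart.ext _ _ (Prod.ext (Fin.ext this.1) (Fin.ext this.2))
  rcases pathGraph_adj.mp hab with hab | hab <;> rcases pathGraph_adj.mp hcd with hcd | hcd <;>
    rw [← hab, ← hcd] at h
  · have := hstep a c (hab ▸ b.2) (hcd ▸ d.2) h
    omega
  · exact absurd (h.trans (neg_sub _ _).symm) (hneg a d (hab ▸ b.2) (hcd ▸ c.2))
  · exact absurd (h.symm.trans (neg_sub _ _).symm) (hneg c b (hcd ▸ d.2) (hab ▸ a.2))
  · have := hstep b d (hab ▸ a.2) (hcd ▸ c.2) (by rw [← neg_sub, h, neg_sub])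
    omega

lemma pathGraph_exists_dart_sub_eq {i : ℕ} (hi : i + 1 < k) {g : G}
    (hg : g = f (i + 1) - f i ∨ g = -(f (i + 1) - f i)) :
    ∃ d : (pathGraph k).Dart, f d.snd - f d.fst = g := by
  let d : (pathGraph k).Dart := ⟨(⟨i, by omega⟩, ⟨i + 1, hi⟩), pathGraph_adj.mpr (Or.inl rfl)⟩
  rcases hg with rfl | rfl
  · exact ⟨d, rfl⟩
  · exact ⟨d.symm, (neg_sub _ _).symm⟩

end pathGraph

end SimpleGraph

namespace ZMod

lemma natCast_eq_natCast_iff_of_lt {n a b : ℕ} (ha : a < n) (hb : b < n) :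
    (a : ZMod n) = b ↔ a = b :=
  ⟨fun h => by rw [← val_natCast_of_lt ha, ← val_natCast_of_lt hb, h], congrArg _⟩

lemma natCast_eq_zero_iff_of_lt {n a : ℕ} (ha : a < n) : (a : ZMod n) = 0 ↔ a = 0 := by
  rw [← Nat.cast_zero, natCast_eq_natCast_iff_of_lt ha (by omega)]

lemma natCast_eq_neg_natCast_iff_of_lt {n a b : ℕ} (hab : a + b < n) :
    (a : ZMod n) = -b ↔ a = 0 ∧ b = 0 := by
  rw [eq_neg_iff_add_eq_zero, ← Nat.cast_add, natCast_eq_zero_iff_of_lt hab, Nat.add_eq_zero_iff]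

lemma exists_eq_natCast_or_eq_neg_natCast {n : ℕ} (hn : Odd n) (x : ZMod n) :
    ∃ c : ℕ, 2 * c < n ∧ (x = c ∨ x = -c) := by
  have : NeZero n := ⟨hn.pos.ne'⟩
  refine ⟨x.valMinAbs.natAbs, ?_, ?_⟩
  · have := x.natAbs_valMinAbs_le
    obtain ⟨m, rfl⟩ := hn
    omega
  · rcases x.valMinAbs.natAbs_eq with h | h <;> [left; right] <;>
      simpa [x.coe_valMinAbs] using congrArg (Int.cast : ℤ → ZMod n) h

lemma eq_of_natCast_succ_choose_two_eq {p a b : ℕ} (hp : p.Prime) (ha : 2 * a < p)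
    (hb : 2 * b < p) (h : ((a + 1).choose 2 : ZMod p) = (b + 1).choose 2) : a = b := by
  have : Fact p.Prime := ⟨hp⟩
  have hchoose (c : ℕ) : ((c + 1).choose 2 : ZMod p) * 2 = (c + 1) * c := by
    have h2 : (c + 1).choose 2 * 2 = (c + 1) * c := by
      simpa using (Nat.add_one_mul_choose_eq c 1).symm
    simpa using congrArg (Nat.cast : ℕ → ZMod p) h2
  have hfactor : ((a : ZMod p) - b) * ((a + b + 1 : ℕ) : ZMod p) = 0 := by
    push_cast
    linear_combination hchoose b - hchoose a + 2 * h
  rcases mul_eq_zero.mp hfactor with hab | hab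
  · exact (natCast_eq_natCast_iff_of_lt (by omega) (by omega)).mp (sub_eq_zero.mp hab)
  · have := Nat.le_of_dvd (by omega) ((natCast_eq_zero_iff _ _).mp hab)
    omega

end ZMod

lemma Nat.choose_two_add_two (c : ℕ) : (c + 2).choose 2 = (c + 1).choose 2 + (c + 1) := by
  rw [Nat.choose_succ_succ' (c + 1) 1, Nat.choose_one_right, Nat.add_comm]

lemma rook_eq_addCayley (n m : ℕ) :
    rook n m = SimpleGraph.addCayley {x | x.1 = 0 ∨ x.2 = 0} := by
  ext v w
  simp only [rook, SimpleGraph.addCayley_adj, Set.mem_ofPred_eq, Prod.fst_add, Prod.snd_add,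
    Prod.fst_neg, Prod.snd_neg, neg_add_eq_zero]
  tauto

def zigzag (n i : ℕ) : ZMod n × ZMod n := (((i + 1) / 2 + 1).choose 2, (i / 2 + 1).choose 2)

lemma zigzag_sub_even (n k : ℕ) :
    zigzag n (2 * k + 1) - zigzag n (2 * k) = (((k + 1 : ℕ) : ZMod n), 0) := by
  simp only [zigzag, show (2 * k + 1 + 1) / 2 = k + 1 by omega, show (2 * k + 1) / 2 = k by omega,
    show 2 * k / 2 = k by omega, Nat.choose_two_add_two, Nat.cast_add, Prod.mk_sub_mk, sub_self,
    add_sub_cancel_left]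

lemma zigzag_sub_odd (n k : ℕ) :
    zigzag n (2 * k + 1 + 1) - zigzag n (2 * k + 1) = (0, ((k + 1 : ℕ) : ZMod n)) := by
  simp only [zigzag, show (2 * k + 1 + 1 + 1) / 2 = k + 1 by omega,
    show (2 * k + 1 + 1) / 2 = k + 1 by omega, show (2 * k + 1) / 2 = k by omega,
    Nat.choose_two_add_two, Nat.cast_add, Prod.mk_sub_mk, sub_self, add_sub_cancel_left]

lemma zigzag_injOn {n : ℕ} (hn : n.Prime) (ho : Odd n) : Set.InjOn (zigzag n) {i | i < n} := by
  intro i hi j hj h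
  obtain ⟨m, rfl⟩ := ho
  simp only [Set.mem_ofPred_eq] at hi hj
  simp only [zigzag, Prod.mk.injEq] at h
  have h1 := ZMod.eq_of_natCast_succ_choose_two_eq hn (by omega) (by omega) h.1
  have h2 := ZMod.eq_of_natCast_succ_choose_two_eq hn (by omega) (by omega) h.2
  omega

section zigzag

variable {n : ℕ}

lemma zigzag_sub_mem (i : ℕ) : zigzag n (i + 1) - zigzag n i ∈ {x | x.1 = 0 ∨ x.2 = 0} := by
  obtain ⟨k, rfl | rfl⟩ := Nat.even_or_odd' i
  · simp [zigzag_sub_even]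
  · simp [zigzag_sub_odd]

lemma eq_of_zigzag_sub_eq (ho : Odd n) {i j : ℕ} (hi : i + 1 < n) (hj : j + 1 < n)
    (h : zigzag n (i + 1) - zigzag n i = zigzag n (j + 1) - zigzag n j) : i = j := by
  obtain ⟨m, rfl⟩ := ho
  obtain ⟨k, rfl | rfl⟩ := Nat.even_or_odd' i <;> obtain ⟨l, rfl | rfl⟩ := Nat.even_or_odd' j <;>
    simp (disch := omega) only [zigzag_sub_even, zigzag_sub_odd, Prod.mk.injEq,
      ZMod.natCast_eq_natCast_iff_of_lt, ZMod.natCast_eq_zero_iff_of_lt,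
      eq_comm (a := (0 : ZMod _))] at h <;> omega

lemma zigzag_sub_ne_neg (ho : Odd n) {i j : ℕ} (hi : i + 1 < n) (hj : j + 1 < n) :
    zigzag n (i + 1) - zigzag n i ≠ -(zigzag n (j + 1) - zigzag n j) := by
  intro h
  obtain ⟨m, rfl⟩ := ho
  obtain ⟨k, rfl | rfl⟩ := Nat.even_or_odd' i <;> obtain ⟨l, rfl | rfl⟩ := Nat.even_or_odd' j <;>
    simp (disch := omega) only [zigzag_sub_even, zigzag_sub_odd, Prod.neg_mk, neg_zero,
      Prod.mk.injEq, ZMod.natCast_eq_neg_natCast_iff_of_lt, ZMod.natCast_eq_zero_iff_of_lt,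
      eq_comm (a := (0 : ZMod _)), neg_eq_zero] at h <;> omega

lemma exists_eq_zigzag_sub_or_eq_neg (ho : Odd n) {g : ZMod n × ZMod n}
    (hg : g ∈ {x | x.1 = 0 ∨ x.2 = 0}) (h0 : g ≠ 0) :
    ∃ i, i + 1 < n ∧
      (g = zigzag n (i + 1) - zigzag n i ∨ g = -(zigzag n (i + 1) - zigzag n i)) := by
  have hpm {x : ZMod n} (hx : x ≠ 0) : ∃ k, 2 * (k + 1) < n ∧
      (x = ((k + 1 : ℕ) : ZMod n) ∨ x = -((k + 1 : ℕ) : ZMod n)) := by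
    obtain ⟨_ | k, hc, h⟩ := ZMod.exists_eq_natCast_or_eq_neg_natCast ho x
    · simp_all
    · exact ⟨k, hc, h⟩
  obtain ⟨a, b⟩ := g
  rcases hg with rfl | rfl
  · obtain ⟨k, hk, hb⟩ := hpm fun hb => h0 (Prod.ext rfl hb)
    refine ⟨2 * k + 1, by omega, ?_⟩
    rw [zigzag_sub_odd]
    rcases hb with rfl | rfl <;> simp
  · obtain ⟨k, hk, ha⟩ := hpm fun ha => h0 (Prod.ext ha rfl)
    refine ⟨2 * k, by omega, ?_⟩
    rw [zigzag_sub_even]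
    rcases ha with rfl | rfl <;> simp

end zigzag

open SimpleGraph in
/-- For every odd prime `n`, the `2(n-1)`-regular graph `K_n □ K_n` can be
decomposed into `n²` paths, each having exactly `n - 1` edges (i.e. `n` vertices). -/
theorem ringel_haggkvist_for_rook (n : ℕ) (hn : n.Prime) (ho : Odd n) :
    ∃ D : Finset ((rook n n).Subgraph),
      D.card = n ^ 2 ∧
      (∀ B ∈ D, Nonempty (B.coe ≃g pathGraph n)) ∧
      (∀ e ∈ (rook n n).edgeSet, ∃! B, B ∈ D ∧ e ∈ B.edgeSet) := by
  have : NeZero n := ⟨hn.ne_zero⟩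
  obtain ⟨d, -⟩ := pathGraph_exists_dart_sub_eq (zigzag n) (k := n) (i := 0) hn.one_lt (Or.inl rfl)
  have : Nonempty (pathGraph n).Dart := ⟨d⟩
  obtain ⟨D, hcard, hpath, hunique⟩ := exists_addCayley_decomposition
    (pathCopy (zigzag n) (zigzag_injOn hn ho) fun i _ => zigzag_sub_mem i)
    (pathGraph_dart_sub_injective _ (fun _ _ => eq_of_zigzag_sub_eq ho)
      (fun _ _ => zigzag_sub_ne_neg ho))
    fun g hg h0 => by
      obtain ⟨i, hi, hg⟩ := exists_eq_zigzag_sub_or_eq_neg ho hg h0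
      exact pathGraph_exists_dart_sub_eq _ hi hg
  rw [rook_eq_addCayley]
  exact ⟨D, by rw [hcard, Fintype.card_prod, ZMod.card, sq], hpath, hunique⟩
end
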